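/- Under the GT-SARAH setup, for every s ≥ 1: Σ_{t=0}^q E[‖v̄^{t,s} − ∇f̄(x^{t,s})‖²] ≤ (3qα²L²/(nB)) Σ_{t=0}^{q−1} E[‖v̄^{t,s}‖²] + (6qL²/(nB)) Σ_{t=0}^q E[‖x^{t,s} − J x^{t,s}‖²/n]. -/

import Mathlib

/-!
Fix an epoch `s` and write `e_t = v̄^{t,s} - ∇f̄(x^{t,s})`. The SARAH update gives
`e_{t+1} = e_t + (nB)⁻¹ ∑_{i,l} D_{i,l}`, where `D_{i,l}` is the deviation of the sampled gradient
difference `∇f_{i,τ}(x_i^{t+1}) - ∇f_{i,τ}(x_i^t)` from its mean over the `m` components. All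
iterates up to `x^{t+1}` are functions of the samples drawn before step `t + 1`, while the fresh
samples are independent of these and uniform, so every `D_{i,l}` is centred conditionally on the
past and on the other fresh samples. Hence `E‖e_{t+1}‖² = E‖e_t‖² + (nB)⁻² ∑ E‖D_{i,l}‖²`, and
mean-squared smoothness gives `E‖D_{i,l}‖² ≤ L² E‖x_i^{t+1} - x_i^t‖²`. Because `W` is column
stochastic, gradient tracking keeps `∑ y^{t+1} = ∑ v^t`, so `x̄^{t+1} = x̄^t - α v̄^t` and
`‖x^{t+1} - x^t‖² ≤ 3‖x^{t+1} - J x^{t+1}‖² + 3‖x^t - J x^t‖² + 3nα²‖v̄^t‖²`. Starting from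
`e_0 = 0` and summing the recursion over `t ≤ q` gives the bound.
-/

open MeasureTheory ProbabilityTheory Finset RealInnerProductSpace

theorem norm_add₃_sq_le {E : Type*} [SeminormedAddCommGroup E] (a b c : E) :
    ‖a + b + c‖ ^ 2 ≤ 3 * (‖a‖ ^ 2 + ‖b‖ ^ 2 + ‖c‖ ^ 2) := by
  have h : ‖a + b + c‖ ≤ ‖a‖ + ‖b‖ + ‖c‖ := norm_add₃_le
  have h' := pow_le_pow_left₀ (norm_nonneg _) h 2
  nlinarith [sq_nonneg (‖a‖ - ‖b‖), sq_nonneg (‖a‖ - ‖c‖), sq_nonneg (‖b‖ - ‖c‖)]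

theorem sum_range_succ_le_mul_sum_of_le_add {a κ : ℕ → ℝ} {q : ℕ} (h₀ : a 0 = 0)
    (hκ : ∀ k < q, 0 ≤ κ k) (hstep : ∀ k < q, a (k + 1) ≤ a k + κ k) :
    ∑ t ∈ range (q + 1), a t ≤ q * ∑ k ∈ range q, κ k := by
  have hle : ∀ t ≤ q, a t ≤ ∑ k ∈ range t, κ k := by
    intro t
    induction t with
    | zero => simp [h₀]
    | succ t ih =>
      intro ht
      rw [sum_range_succ]
      linarith [hstep t ht, ih (by omega)]
  calc ∑ t ∈ range (q + 1), a t = ∑ t ∈ range q, a (t + 1) := by simp [sum_range_succ', h₀]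
    _ ≤ ∑ t ∈ range q, ∑ k ∈ range q, κ k := by
      refine sum_le_sum fun t ht => (hle (t + 1) (mem_range.mp ht)).trans ?_
      exact sum_le_sum_of_subset_of_nonneg (range_subset_range.mpr (mem_range.mp ht))
        fun k hk _ => hκ k (mem_range.mp hk)
    _ = q * ∑ k ∈ range q, κ k := by rw [sum_const, card_range, nsmul_eq_mul]

theorem sum_sum_smul_eq_sum_of_col_sum_eq_one {ι M : Type*} [Fintype ι] [AddCommMonoid M]
    [Module ℝ M] {W : Matrix ι ι ℝ} (hW : ∀ r, ∑ i, W i r = 1) (z : ι → M) :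
    ∑ i, ∑ r, W i r • z r = ∑ r, z r := by
  rw [sum_comm]
  exact sum_congr rfl fun r _ => by rw [← sum_smul, hW r, one_smul]

section InnerProduct

variable {E ι : Type*} [NormedAddCommGroup E] [InnerProductSpace ℝ E] [Fintype ι]

theorem card_smul_average (a : ι → E) :
    (Fintype.card ι : ℝ) • ((Fintype.card ι : ℝ)⁻¹ • ∑ j, a j) = ∑ j, a j := by
  rcases isEmpty_or_nonempty ι with hι | hι
  · simp
  · rw [smul_inv_smul₀ (by positivity)]

theorem sum_sub_average (a : ι → E) : ∑ j, (a j - (Fintype.card ι : ℝ)⁻¹ • ∑ j', a j') = 0 := by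
  rw [sum_sub_distrib, sum_const, card_univ, ← Nat.cast_smul_eq_nsmul ℝ, card_smul_average,
    sub_self]

theorem sum_norm_sub_average_sq_le (a : ι → E) :
    ∑ j, ‖a j - (Fintype.card ι : ℝ)⁻¹ • ∑ j', a j'‖ ^ 2 ≤ ∑ j, ‖a j‖ ^ 2 := by
  set c := (Fintype.card ι : ℝ)⁻¹ • ∑ j', a j'
  have hc : ∑ j, a j = (Fintype.card ι : ℝ) • c := (card_smul_average a).symm
  have : ∑ j, ‖a j - c‖ ^ 2 = ∑ j, ‖a j‖ ^ 2 - Fintype.card ι * ‖c‖ ^ 2 := by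
    simp only [norm_sub_sq_real]
    rw [sum_add_distrib, sum_sub_distrib, ← mul_sum, ← sum_inner, hc, real_inner_smul_left,
      real_inner_self_eq_norm_sq, sum_const, card_univ, nsmul_eq_mul]
    ring
  rw [this]
  nlinarith [sq_nonneg ‖c‖, (Nat.cast_nonneg (Fintype.card ι) : (0:ℝ) ≤ _)]

theorem sum_norm_sub_sq_le (a b : ι → E) :
    ∑ i, ‖b i - a i‖ ^ 2
      ≤ 3 * ∑ i, ‖b i - (Fintype.card ι : ℝ)⁻¹ • ∑ i', b i'‖ ^ 2
        + 3 * ∑ i, ‖a i - (Fintype.card ι : ℝ)⁻¹ • ∑ i', a i'‖ ^ 2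
        + 3 * Fintype.card ι * ‖(Fintype.card ι : ℝ)⁻¹ • ∑ i, b i
            - (Fintype.card ι : ℝ)⁻¹ • ∑ i, a i‖ ^ 2 := by
  set N := (Fintype.card ι : ℝ)⁻¹
  calc ∑ i, ‖b i - a i‖ ^ 2
      = ∑ i, ‖(b i - N • ∑ i', b i') + -(a i - N • ∑ i', a i')
          + (N • ∑ i, b i - N • ∑ i, a i)‖ ^ 2 := by
        congr! 3; abel
    _ ≤ ∑ i, 3 * (‖b i - N • ∑ i', b i'‖ ^ 2 + ‖a i - N • ∑ i', a i'‖ ^ 2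
          + ‖N • ∑ i, b i - N • ∑ i, a i‖ ^ 2) := by
        gcongr with i
        rw [← norm_neg (a i - _)]
        exact norm_add₃_sq_le _ _ _
    _ = _ := by
        simp only [← mul_sum, sum_add_distrib, sum_const, card_univ, nsmul_eq_mul]
        ring

theorem norm_add_smul_sum_sq {κ : Type*} [Fintype κ] (a : E) (d : κ → E) (c : ℝ) :
    ‖a + c • ∑ k, d k‖ ^ 2
      = ‖a‖ ^ 2 + 2 * c * ∑ k, ⟪a, d k⟫ + c ^ 2 * ∑ k, ∑ k', ⟪d k, d k'⟫ := by
  rw [norm_add_sq_real, inner_smul_right, inner_sum, norm_smul, mul_pow, Real.norm_eq_abs,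
    sq_abs, ← real_inner_self_eq_norm_sq (∑ k, d k), sum_inner]
  simp only [inner_sum]
  ring

end InnerProduct

section Probability

variable {Ω A A' : Type*} [MeasurableSpace Ω] {μ : Measure Ω}
  [Fintype A] [MeasurableSpace A] [MeasurableSingletonClass A]
  [Fintype A'] [MeasurableSpace A'] [MeasurableSingletonClass A']

theorem integral_comp_eq_sum_measureReal [IsFiniteMeasure μ] {Z : Ω → A} (hZ : Measurable Z)
    (G : A → ℝ) : ∫ ω, G (Z ω) ∂μ = ∑ a, μ.real (Z ⁻¹' {a}) * G a := by
  rw [← integral_map hZ.aemeasurable (Measurable.of_discrete.aestronglyMeasurable),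
    integral_fintype Integrable.of_finite]
  simp [map_measureReal_apply hZ (measurableSet_singleton _)]

theorem ProbabilityTheory.IndepFun.integral_comp_eq_integral_average [IsProbabilityMeasure μ]
    {Z : Ω → A'} {Y : Ω → A} (hZ : Measurable Z) (hY : Measurable Y) (hind : IndepFun Z Y μ)
    (hunif : ∀ a, μ (Y ⁻¹' {a}) = (Fintype.card A : ENNReal)⁻¹) (G : A' → A → ℝ) :
    ∫ ω, G (Z ω) (Y ω) ∂μ = ∫ ω, (Fintype.card A : ℝ)⁻¹ * ∑ a, G (Z ω) a ∂μ := by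
  have hpair : ∀ z a, μ.real ((fun ω => (Z ω, Y ω)) ⁻¹' {(z, a)})
      = μ.real (Z ⁻¹' {z}) * (Fintype.card A : ℝ)⁻¹ := by
    intro z a
    have : (fun ω => (Z ω, Y ω)) ⁻¹' {(z, a)} = Z ⁻¹' {z} ∩ Y ⁻¹' {a} := by
      ext ω; simp
    rw [this, measureReal_def, hind.measure_inter_preimage_eq_mul _ _
      (measurableSet_singleton z) (measurableSet_singleton a), hunif, ENNReal.toReal_mul,
      ← measureReal_def, ENNReal.toReal_inv, ENNReal.toReal_natCast]
  rw [integral_comp_eq_sum_measureReal (hZ.prodMk hY) (fun za => G za.1 za.2),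
    integral_comp_eq_sum_measureReal hZ (fun z => _ * ∑ a, G z a), Fintype.sum_prod_type]
  simp only [hpair, Finset.mul_sum]
  exact sum_congr rfl fun _ _ => sum_congr rfl fun _ _ => by ring

theorem Function.FactorsThrough.integrable [IsFiniteMeasure μ] {β : Type*} [Finite β]
    [MeasurableSpace β] [MeasurableSingletonClass β] {Z : Ω → β} (hZ : Measurable Z)
    {g : Ω → ℝ} (hg : g.FactorsThrough Z) : Integrable g μ := by
  rw [← hg.extend_comp fun _ => 0]
  exact Integrable.of_finite.comp_measurable hZ

variable {ι E : Type*} {T : ι → Ω → A}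

theorem ProbabilityTheory.iIndepFun.integral_comp_eq_integral_average [IsProbabilityMeasure μ]
    (hT : iIndepFun T μ) (hmeas : ∀ k, Measurable (T k)) {S : Finset ι} {k₀ : ι} (hk₀ : k₀ ∉ S)
    (hunif : ∀ a, μ (T k₀ ⁻¹' {a}) = (Fintype.card A : ENNReal)⁻¹)
    {g : Ω → E} (hg : g.FactorsThrough fun ω (k : S) => T k ω) (G : E → A → ℝ) :
    ∫ ω, G (g ω) (T k₀ ω) ∂μ = ∫ ω, (Fintype.card A : ℝ)⁻¹ * ∑ a, G (g ω) a ∂μ := by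
  classical
  obtain ⟨ω₀⟩ := nonempty_of_isProbabilityMeasure μ
  have hind : IndepFun (fun ω (k : S) => T k ω) (T k₀) μ :=
    (hT.indepFun_finset S {k₀} (disjoint_singleton_right.mpr hk₀) hmeas).comp measurable_id
      (measurable_pi_apply (⟨k₀, mem_singleton_self k₀⟩ : ({k₀} : Finset ι)))
  have key := hind.integral_comp_eq_integral_average
    (measurable_pi_lambda (fun ω (k : S) => T k ω) fun k => hmeas k)
    (hmeas k₀) hunif
    fun z a => G (Function.extend (fun ω (k : S) => T k ω) g (fun _ => g ω₀) z) a
  simpa only [hg.extend_apply] using key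

theorem integral_norm_add_smul_sum_sq {E κ : Type*} [NormedAddCommGroup E]
    [InnerProductSpace ℝ E] [Fintype κ] {a : Ω → E} {d : κ → Ω → E}
    (c : ℝ) (ha : Integrable (fun ω => ‖a ω‖ ^ 2) μ)
    (had : ∀ k, Integrable (fun ω => ⟪a ω, d k ω⟫) μ)
    (hdd : ∀ k k', Integrable (fun ω => ⟪d k ω, d k' ω⟫) μ)
    (had₀ : ∀ k, ∫ ω, ⟪a ω, d k ω⟫ ∂μ = 0)
    (hdd₀ : ∀ k k', k ≠ k' → ∫ ω, ⟪d k ω, d k' ω⟫ ∂μ = 0) :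
    ∫ ω, ‖a ω + c • ∑ k, d k ω‖ ^ 2 ∂μ
      = ∫ ω, ‖a ω‖ ^ 2 ∂μ + c ^ 2 * ∑ k, ∫ ω, ‖d k ω‖ ^ 2 ∂μ := by
  have hlin : Integrable (fun ω => 2 * c * ∑ k, ⟪a ω, d k ω⟫) μ :=
    (integrable_finsetSum _ fun k _ => had k).const_mul _
  have hquad : Integrable (fun ω => c ^ 2 * ∑ k, ∑ k', ⟪d k ω, d k' ω⟫) μ :=
    (integrable_finsetSum _ fun k _ => integrable_finsetSum _ fun k' _ => hdd k k').const_mul _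
  simp only [norm_add_smul_sum_sq]
  rw [integral_add (f := fun ω => ‖a ω‖ ^ 2 + 2 * c * ∑ k, ⟪a ω, d k ω⟫) (ha.add hlin) hquad,
    integral_add ha hlin, integral_const_mul, integral_const_mul,
    integral_finsetSum _ fun k _ => had k,
    integral_finsetSum _ fun k _ => integrable_finsetSum _ fun k' _ => hdd k k']
  simp only [had₀, sum_const_zero, mul_zero, add_zero]
  congr 2
  refine sum_congr rfl fun k _ => ?_
  rw [integral_finsetSum _ fun k' _ => hdd k k',
    sum_eq_single k (fun k' _ hk' => hdd₀ k k' hk'.symm) (by simp)]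
  simp only [real_inner_self_eq_norm_sq]

end Probability

section Gradient

variable {E : Type*} [NormedAddCommGroup E] [InnerProductSpace ℝ E] [CompleteSpace E]

theorem gradient_const_mul_sum {J : Type*} (s : Finset J) {f : J → E → ℝ} {u : E}
    (hf : ∀ j ∈ s, DifferentiableAt ℝ (f j) u) (c : ℝ) :
    gradient (fun z => c * ∑ j ∈ s, f j z) u = c • ∑ j ∈ s, gradient (f j) u := by
  simp only [gradient, fderiv_const_mul (DifferentiableAt.fun_sum hf) c, fderiv_fun_sum hf,
    map_smul, map_sum]

noncomputable def sampleGradDev {J : Type*} (g : J → E → ℝ) (G : E → ℝ) (j : J) (u w : E) : E :=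
  (gradient (g j) u - gradient (g j) w) - (gradient G u - gradient G w)

variable {J : Type*} [Fintype J] {g : J → E → ℝ} {G : E → ℝ}

theorem gradient_sub_gradient_of_eq_average
    (hG : G = fun z => (Fintype.card J : ℝ)⁻¹ * ∑ j, g j z) (hg : ∀ j, Differentiable ℝ (g j))
    (u w : E) :
    gradient G u - gradient G w
      = (Fintype.card J : ℝ)⁻¹ • ∑ j, (gradient (g j) u - gradient (g j) w) := by
  simp only [hG, gradient_const_mul_sum _ (fun j _ => (hg j).differentiableAt), sum_sub_distrib,
    smul_sub]

theorem sum_sampleGradDev (hG : G = fun z => (Fintype.card J : ℝ)⁻¹ * ∑ j, g j z)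
    (hg : ∀ j, Differentiable ℝ (g j)) (u w : E) : ∑ j, sampleGradDev g G j u w = 0 := by
  simp only [sampleGradDev, gradient_sub_gradient_of_eq_average hG hg]
  exact sum_sub_average _

theorem sum_norm_sampleGradDev_sq_le (hG : G = fun z => (Fintype.card J : ℝ)⁻¹ * ∑ j, g j z)
    (hg : ∀ j, Differentiable ℝ (g j)) (u w : E) :
    ∑ j, ‖sampleGradDev g G j u w‖ ^ 2 ≤ ∑ j, ‖gradient (g j) u - gradient (g j) w‖ ^ 2 := by
  simp only [sampleGradDev, gradient_sub_gradient_of_eq_average hG hg]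
  exact sum_norm_sub_average_sq_le _

end Gradient

section GTSarah

variable {Ω E : Type*} [NormedAddCommGroup E] [InnerProductSpace ℝ E] [CompleteSpace E]

/-- `x t s i` is `x_i^{t,s}`, and likewise for `y` and `v`; `v` is indexed by `t : ℤ` so that
`v (-1) s` is the value `v^{-1,s}` carried over from the previous epoch. -/
structure IsGTSarah {n m B : ℕ} (q : ℕ) (W : Matrix (Fin n) (Fin n) ℝ) (α : ℝ)
    (f : Fin n → Fin m → E → ℝ) (fI : Fin n → E → ℝ) (τ : ℕ → ℕ → Fin n → Fin B → Ω → Fin m)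
    (x y : ℕ → ℕ → Fin n → Ω → E) (v : ℤ → ℕ → Fin n → Ω → E) (x0 : E) : Prop where
  x_init : ∀ i ω, x 0 1 i ω = x0
  y_init : ∀ i ω, y 0 1 i ω = 0
  v_init : ∀ i ω, v (-1) 1 i ω = 0
  v_zero : ∀ s, 1 ≤ s → ∀ i ω, v 0 s i ω = gradient (fI i) (x 0 s i ω)
  v_rec : ∀ s, 1 ≤ s → ∀ t : ℕ, 1 ≤ t → t ≤ q → ∀ i ω,
    v (t : ℤ) s i ω = (B : ℝ)⁻¹ • (∑ l, (gradient (f i (τ t s i l ω)) (x t s i ω)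
      - gradient (f i (τ t s i l ω)) (x (t - 1) s i ω))) + v ((t : ℤ) - 1) s i ω
  y_rec : ∀ s, 1 ≤ s → ∀ t : ℕ, t ≤ q → ∀ i ω,
    y (t + 1) s i ω = (∑ r, W i r • y t s r ω) + v (t : ℤ) s i ω - v ((t : ℤ) - 1) s i ω
  x_rec : ∀ s, 1 ≤ s → ∀ t : ℕ, t ≤ q → ∀ i ω,
    x (t + 1) s i ω = (∑ r, W i r • x t s r ω) - α • y (t + 1) s i ω
  x_carry : ∀ s, 1 ≤ s → ∀ i ω, x 0 (s + 1) i ω = x (q + 1) s i ω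
  y_carry : ∀ s, 1 ≤ s → ∀ i ω, y 0 (s + 1) i ω = y (q + 1) s i ω
  v_carry : ∀ s, 1 ≤ s → ∀ i ω, v (-1) (s + 1) i ω = v (q : ℤ) s i ω

def SameSamplesUntil {ι κ A : Type*} (τ : ℕ → ℕ → ι → κ → Ω → A) (q s t : ℕ) (ω ω' : Ω) :
    Prop :=
  ∀ s' t', 1 ≤ s' → 1 ≤ t' → t' ≤ q → s' < s ∨ s' = s ∧ t' ≤ t →
    ∀ i l, τ t' s' i l ω = τ t' s' i l ω'

theorem SameSamplesUntil.mono {ι κ A : Type*} {τ : ℕ → ℕ → ι → κ → Ω → A} {q s t s' t' : ℕ}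
    {ω ω' : Ω} (h : SameSamplesUntil τ q s t ω ω') (hle : s' < s ∨ s' = s ∧ t' ≤ t) :
    SameSamplesUntil τ q s' t' ω ω' :=
  fun a b ha hb hbq hab => h a b ha hb hbq (by omega)

/-- `((t, s), i, l)` indexes the sample `τ t s i l`; the pair lists the inner step first. -/
abbrev SampleIndex (q : ℕ) (ι κ : Type*) := {u : ℕ × ℕ // 1 ≤ u.1 ∧ u.1 ≤ q ∧ 1 ≤ u.2} × ι × κ

section Samples

variable {ι κ A : Type*} {q s t : ℕ}

def sampleAt (τ : ℕ → ℕ → ι → κ → Ω → A) (k : SampleIndex q ι κ) : Ω → A :=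
  τ k.1.1.1 k.1.1.2 k.2.1 k.2.2

def samplesUntil [Fintype ι] [Fintype κ] (q s t : ℕ) : Finset (SampleIndex q ι κ) :=
  (((Icc 1 q ×ˢ Icc 1 s).filter fun u : ℕ × ℕ => u.2 < s ∨ u.2 = s ∧ u.1 ≤ t).subtype
    fun u => 1 ≤ u.1 ∧ u.1 ≤ q ∧ 1 ≤ u.2) ×ˢ univ

variable [Fintype ι] [Fintype κ]

theorem mem_samplesUntil {k : SampleIndex q ι κ} :
    k ∈ samplesUntil q s t ↔ k.1.1.2 < s ∨ k.1.1.2 = s ∧ k.1.1.1 ≤ t := by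
  obtain ⟨⟨⟨t', s'⟩, ht', htq, hs'⟩, i, l⟩ := k
  simp only [samplesUntil, mem_product, mem_subtype, mem_filter, mem_Icc, mem_univ, and_true]
  omega

theorem sameSamplesUntil_of_eq {τ : ℕ → ℕ → ι → κ → Ω → A} {S : Finset (SampleIndex q ι κ)}
    (hS : samplesUntil q s t ⊆ S) {ω ω' : Ω}
    (h : (fun k : S => sampleAt τ k.1 ω) = fun k : S => sampleAt τ k.1 ω') :
    SameSamplesUntil τ q s t ω ω' :=
  fun s' t' hs' ht' htq hlex i l =>
    congrFun h ⟨⟨⟨(t', s'), ht', htq, hs'⟩, i, l⟩, hS (mem_samplesUntil.mpr hlex)⟩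

theorem factorsThrough_of_sameSamplesUntil {F : Type*} {τ : ℕ → ℕ → ι → κ → Ω → A}
    {S : Finset (SampleIndex q ι κ)} (hS : samplesUntil q s t ⊆ S) {g : Ω → F}
    (hg : ∀ ω ω', SameSamplesUntil τ q s t ω ω' → g ω = g ω') :
    g.FactorsThrough fun ω (k : S) => sampleAt τ k.1 ω :=
  fun ω ω' h => hg ω ω' (sameSamplesUntil_of_eq hS h)

end Samples

structure IsIndepUniformSamples [MeasurableSpace Ω] {ι κ : Type*} {m : ℕ} (μ : Measure Ω)
    (q : ℕ) (τ : ℕ → ℕ → ι → κ → Ω → Fin m) : Prop where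
  measurable : ∀ t s i l, Measurable (τ t s i l)
  indep : iIndepFun (fun k : SampleIndex q ι κ => sampleAt τ k) μ
  uniform : ∀ t s i l, 1 ≤ t → t ≤ q → 1 ≤ s → ∀ j : Fin m,
    μ (τ t s i l ⁻¹' {j}) = 1 / (m : ENNReal)

namespace IsIndepUniformSamples

variable [MeasurableSpace Ω] {μ : Measure Ω} {ι κ : Type*} {m q : ℕ}
  {τ : ℕ → ℕ → ι → κ → Ω → Fin m}

theorem integrable [Fintype ι] [Fintype κ] [IsFiniteMeasure μ]
    (hτ : IsIndepUniformSamples μ q τ) {s t : ℕ} {g : Ω → ℝ}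
    (hg : ∀ ω ω', SameSamplesUntil τ q s t ω ω' → g ω = g ω') : Integrable g μ :=
  (factorsThrough_of_sameSamplesUntil subset_rfl hg).integrable
    (measurable_pi_lambda _ fun _ => hτ.measurable _ _ _ _)

theorem integral_comp_eq_integral_average [IsProbabilityMeasure μ]
    (hτ : IsIndepUniformSamples μ q τ) {S : Finset (SampleIndex q ι κ)} {k₀ : SampleIndex q ι κ}
    (hk₀ : k₀ ∉ S) {F : Type*} {g : Ω → F}
    (hg : g.FactorsThrough fun ω (k : S) => sampleAt τ k.1 ω) (G : F → Fin m → ℝ) :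
    ∫ ω, G (g ω) (sampleAt τ k₀ ω) ∂μ = ∫ ω, (m : ℝ)⁻¹ * ∑ j, G (g ω) j ∂μ := by
  have hunif : ∀ j, μ (sampleAt τ k₀ ⁻¹' {j}) = (Fintype.card (Fin m) : ENNReal)⁻¹ := fun j => by
    rw [sampleAt, hτ.uniform _ _ _ _ k₀.1.2.1 k₀.1.2.2.1 k₀.1.2.2.2, Fintype.card_fin, one_div]
  simpa using hτ.indep.integral_comp_eq_integral_average (fun _ => hτ.measurable _ _ _ _) hk₀
    hunif hg G

end IsIndepUniformSamples

/-- `v̄^{t,s} - ∇f̄(x^{t,s})`. -/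
noncomputable def avgGradError {n : ℕ} (fI : Fin n → E → ℝ) (x : ℕ → ℕ → Fin n → Ω → E)
    (v : ℤ → ℕ → Fin n → Ω → E) (s t : ℕ) (ω : Ω) : E :=
  (n : ℝ)⁻¹ • ∑ i, v t s i ω - (n : ℝ)⁻¹ • ∑ i, gradient (fI i) (x t s i ω)

/-- `‖x^{t,s} - J x^{t,s}‖²`. -/
noncomputable def consensusError {n : ℕ} (x : ℕ → ℕ → Fin n → Ω → E) (s t : ℕ) (ω : Ω) : ℝ :=
  ∑ i, ‖x t s i ω - (n : ℝ)⁻¹ • ∑ i', x t s i' ω‖ ^ 2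

/-- The deviation `D_{i,l}` of the step from `t` to `t + 1` in epoch `s`, with `k = (i, l)`. -/
noncomputable def sampleDev {n m B : ℕ} (f : Fin n → Fin m → E → ℝ) (fI : Fin n → E → ℝ)
    (τ : ℕ → ℕ → Fin n → Fin B → Ω → Fin m) (x : ℕ → ℕ → Fin n → Ω → E) (s t : ℕ)
    (k : Fin n × Fin B) (ω : Ω) : E :=
  sampleGradDev (f k.1) (fI k.1) (τ (t + 1) s k.1 k.2 ω) (x (t + 1) s k.1 ω) (x t s k.1 ω)

namespace IsGTSarah

variable {n m B q : ℕ} {W : Matrix (Fin n) (Fin n) ℝ} {α : ℝ} {f : Fin n → Fin m → E → ℝ}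
  {fI : Fin n → E → ℝ} {τ : ℕ → ℕ → Fin n → Fin B → Ω → Fin m}
  {x y : ℕ → ℕ → Fin n → Ω → E} {v : ℤ → ℕ → Fin n → Ω → E} {x0 : E}
  {s t : ℕ}

theorem v_succ (h : IsGTSarah q W α f fI τ x y v x0) (hs : 1 ≤ s) (ht : t < q) (i : Fin n)
    (ω : Ω) :
    v ((t + 1 : ℕ) : ℤ) s i ω = (B : ℝ)⁻¹ • (∑ l, (gradient (f i (τ (t + 1) s i l ω))
      (x (t + 1) s i ω) - gradient (f i (τ (t + 1) s i l ω)) (x t s i ω))) + v t s i ω := by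
  simpa using h.v_rec s hs (t + 1) (by omega) ht i ω

theorem y_succ_succ (h : IsGTSarah q W α f fI τ x y v x0) (hs : 1 ≤ s) (ht : t < q) (i : Fin n)
    (ω : Ω) :
    y (t + 1 + 1) s i ω
      = (∑ r, W i r • y (t + 1) s r ω) + v ((t + 1 : ℕ) : ℤ) s i ω - v t s i ω := by
  simpa using h.y_rec s hs (t + 1) ht i ω

theorem y_one (h : IsGTSarah q W α f fI τ x y v x0) (hs : 1 ≤ s) (i : Fin n) (ω : Ω) :
    y 1 s i ω = (∑ r, W i r • y 0 s r ω) + v 0 s i ω - v (-1) s i ω := by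
  simpa using h.y_rec s hs 0 (Nat.zero_le q) i ω

theorem sum_y_succ_sub_sum_v (h : IsGTSarah q W α f fI τ x y v x0) (hW : ∀ r, ∑ i, W i r = 1)
    (hs : 1 ≤ s) (ht : t ≤ q) (ω : Ω) :
    ∑ i, y (t + 1) s i ω - ∑ i, v t s i ω = ∑ i, y t s i ω - ∑ i, v ((t : ℤ) - 1) s i ω := by
  simp only [h.y_rec s hs t ht, sum_sub_distrib, sum_add_distrib,
    sum_sum_smul_eq_sum_of_col_sum_eq_one hW]
  abel

theorem sum_y_sub_sum_v_eq_zero (h : IsGTSarah q W α f fI τ x y v x0)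
    (hW : ∀ r, ∑ i, W i r = 1) (hs : 1 ≤ s) (ht : t ≤ q + 1) (ω : Ω) :
    ∑ i, y t s i ω - ∑ i, v ((t : ℤ) - 1) s i ω = 0 := by
  have hepoch : ∀ s, 1 ≤ s → ∀ t ≤ q + 1, ∑ i, y t s i ω - ∑ i, v ((t : ℤ) - 1) s i ω
      = ∑ i, y 0 s i ω - ∑ i, v (-1) s i ω := by
    intro s hs t
    induction t with
    | zero => simp
    | succ t ih =>
      intro ht
      rw [← ih (by omega), ← h.sum_y_succ_sub_sum_v hW hs (t := t) (by omega)]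
      push_cast
      simp
  induction s, hs using Nat.le_induction generalizing t with
  | base => rw [hepoch 1 le_rfl t ht]; simp [h.y_init, h.v_init]
  | succ s hs ih =>
    rw [hepoch (s + 1) (by omega) t ht, ← ih (le_refl (q + 1))]
    simp [h.y_carry s hs, h.v_carry s hs]

theorem sum_y_succ (h : IsGTSarah q W α f fI τ x y v x0) (hW : ∀ r, ∑ i, W i r = 1)
    (hs : 1 ≤ s) (ht : t ≤ q) (ω : Ω) : ∑ i, y (t + 1) s i ω = ∑ i, v t s i ω := by
  simpa [sub_eq_zero] using h.sum_y_sub_sum_v_eq_zero hW hs (t := t + 1) (by omega) ω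

theorem sum_x_succ (h : IsGTSarah q W α f fI τ x y v x0) (hW : ∀ r, ∑ i, W i r = 1)
    (hs : 1 ≤ s) (ht : t ≤ q) (ω : Ω) :
    ∑ i, x (t + 1) s i ω = ∑ i, x t s i ω - α • ∑ i, v t s i ω := by
  simp only [h.x_rec s hs t ht, sum_sub_distrib, sum_sum_smul_eq_sum_of_col_sum_eq_one hW,
    ← smul_sum, h.sum_y_succ hW hs ht]

theorem eq_of_sameSamplesUntil_of_start (h : IsGTSarah q W α f fI τ x y v x0) (hs : 1 ≤ s)
    {ω ω' : Ω} (hx : ∀ i, x 0 s i ω = x 0 s i ω') (hy : ∀ i, y 0 s i ω = y 0 s i ω')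
    (hv : ∀ i, v (-1) s i ω = v (-1) s i ω') (ht : t ≤ q)
    (hω : SameSamplesUntil τ q s t ω ω') :
    (∀ i, v t s i ω = v t s i ω') ∧ (∀ i, x t s i ω = x t s i ω') ∧
      (∀ i, x (t + 1) s i ω = x (t + 1) s i ω') ∧ (∀ i, y (t + 1) s i ω = y (t + 1) s i ω') := by
  induction t with
  | zero =>
    have hv0 : ∀ i, v 0 s i ω = v 0 s i ω' := fun i => by simp only [h.v_zero s hs, hx]
    have hy1 : ∀ i, y 1 s i ω = y 1 s i ω' := fun i => by simp only [h.y_one hs, hy, hv0, hv]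
    exact ⟨hv0, hx, fun i => by simp only [h.x_rec s hs 0 ht, hx, hy1], hy1⟩
  | succ t ih =>
    obtain ⟨hvt, hxt, hx1, hy1⟩ := ih (by omega) (hω.mono (by omega))
    have hτ : ∀ i l, τ (t + 1) s i l ω = τ (t + 1) s i l ω' :=
      hω s (t + 1) hs (by omega) ht (by omega)
    have hv1 : ∀ i, v ((t + 1 : ℕ) : ℤ) s i ω = v ((t + 1 : ℕ) : ℤ) s i ω' := fun i => by
      simp only [h.v_succ hs ht, hτ, hx1, hxt, hvt]
    have hy2 : ∀ i, y (t + 1 + 1) s i ω = y (t + 1 + 1) s i ω' := fun i => by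
      simp only [h.y_succ_succ hs ht, hy1, hv1, hvt]
    exact ⟨hv1, hx1, fun i => by simp only [h.x_rec s hs (t + 1) ht, hx1, hy2], hy2⟩

theorem start_eq_of_sameSamplesUntil (h : IsGTSarah q W α f fI τ x y v x0) (hs : 1 ≤ s)
    {ω ω' : Ω} (hω : SameSamplesUntil τ q s 0 ω ω') :
    (∀ i, x 0 s i ω = x 0 s i ω') ∧ (∀ i, y 0 s i ω = y 0 s i ω') ∧
      (∀ i, v (-1) s i ω = v (-1) s i ω') := by
  induction s, hs using Nat.le_induction with
  | base => simp [h.x_init, h.y_init, h.v_init]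
  | succ s hs ih =>
    obtain ⟨hx, hy, hv⟩ := ih (hω.mono (by omega))
    obtain ⟨hvq, -, hxq, hyq⟩ :=
      h.eq_of_sameSamplesUntil_of_start hs hx hy hv le_rfl (hω.mono (by omega))
    exact ⟨fun i => by simp only [h.x_carry s hs, hxq], fun i => by simp only [h.y_carry s hs, hyq],
      fun i => by simp only [h.v_carry s hs, hvq]⟩

theorem eq_of_sameSamplesUntil (h : IsGTSarah q W α f fI τ x y v x0) (hs : 1 ≤ s) (ht : t ≤ q)
    {ω ω' : Ω} (hω : SameSamplesUntil τ q s t ω ω') :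
    (∀ i, v t s i ω = v t s i ω') ∧ (∀ i, x t s i ω = x t s i ω') ∧
      (∀ i, x (t + 1) s i ω = x (t + 1) s i ω') ∧ (∀ i, y (t + 1) s i ω = y (t + 1) s i ω') :=
  let ⟨hx, hy, hv⟩ := h.start_eq_of_sameSamplesUntil hs (hω.mono (.inr ⟨rfl, t.zero_le⟩))
  h.eq_of_sameSamplesUntil_of_start hs hx hy hv ht hω

theorem avgGradError_zero (h : IsGTSarah q W α f fI τ x y v x0) (hs : 1 ≤ s) (ω : Ω) :
    avgGradError fI x v s 0 ω = 0 := by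
  simp [avgGradError, h.v_zero s hs]

theorem avgGradError_succ (h : IsGTSarah q W α f fI τ x y v x0) (hB : B ≠ 0) (hs : 1 ≤ s)
    (ht : t < q) (ω : Ω) :
    avgGradError fI x v s (t + 1) ω = avgGradError fI x v s t ω
      + ((n : ℝ)⁻¹ * (B : ℝ)⁻¹) • ∑ k, sampleDev f fI τ x s t k ω := by
  simp only [avgGradError, h.v_succ hs ht, Fintype.sum_prod_type, sampleDev, sampleGradDev,
    sum_sub_distrib, sum_const, card_univ, Fintype.card_fin, sum_add_distrib, ← smul_sum,
    smul_add, smul_sub, ← Nat.cast_smul_eq_nsmul ℝ, smul_smul]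
  match_scalars <;> field_simp
  ring

theorem sum_norm_x_succ_sub_le (h : IsGTSarah q W α f fI τ x y v x0) (hW : ∀ r, ∑ i, W i r = 1)
    (hs : 1 ≤ s) (ht : t ≤ q) (ω : Ω) :
    ∑ i, ‖x (t + 1) s i ω - x t s i ω‖ ^ 2
      ≤ 3 * consensusError x s (t + 1) ω + 3 * consensusError x s t ω
        + 3 * n * α ^ 2 * ‖(n : ℝ)⁻¹ • ∑ i, v t s i ω‖ ^ 2 := by
  have hmean : (n : ℝ)⁻¹ • ∑ i, x (t + 1) s i ω - (n : ℝ)⁻¹ • ∑ i, x t s i ω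
      = -(α • ((n : ℝ)⁻¹ • ∑ i, v t s i ω)) := by
    rw [h.sum_x_succ hW hs ht]
    module
  have := sum_norm_sub_sq_le (fun i => x t s i ω) (fun i => x (t + 1) s i ω)
  rw [Fintype.card_fin, hmean, norm_neg, norm_smul, mul_pow, Real.norm_eq_abs, sq_abs] at this
  simpa only [consensusError, mul_assoc] using this

section Expectation

variable [MeasurableSpace Ω] {μ : Measure Ω} [IsProbabilityMeasure μ]

theorem integral_comp_sample_succ_eq_average (h : IsGTSarah q W α f fI τ x y v x0)
    (hτ : IsIndepUniformSamples μ q τ) (hs : 1 ≤ s) (ht : t < q)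
    {S : Finset (SampleIndex q (Fin n) (Fin B))} (hS : samplesUntil q s t ⊆ S)
    (i : Fin n) (l : Fin B)
    (hk : (⟨⟨(t + 1, s), Nat.le_add_left 1 t, ht, hs⟩, i, l⟩ : SampleIndex q (Fin n) (Fin B)) ∉ S)
    {F : Type*} {u : Ω → F} (hu : u.FactorsThrough fun ω (k : S) => sampleAt τ k.1 ω)
    (G : F → E → E → Fin m → ℝ) :
    ∫ ω, G (u ω) (x (t + 1) s i ω) (x t s i ω) (τ (t + 1) s i l ω) ∂μ
      = ∫ ω, (m : ℝ)⁻¹ * ∑ j, G (u ω) (x (t + 1) s i ω) (x t s i ω) j ∂μ := by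
  have hux : (fun ω => (u ω, x (t + 1) s i ω, x t s i ω)).FactorsThrough
      fun ω (k : S) => sampleAt τ k.1 ω := fun ω ω' hωω' => by
    obtain ⟨-, hxt, hx1, -⟩ := h.eq_of_sameSamplesUntil hs ht.le (sameSamplesUntil_of_eq hS hωω')
    simp only [hu hωω', hxt, hx1]
  exact hτ.integral_comp_eq_integral_average hk hux fun a j => G a.1 a.2.1 a.2.2 j

theorem integral_norm_sampleDev_sq_le (h : IsGTSarah q W α f fI τ x y v x0)
    (hτ : IsIndepUniformSamples μ q τ) {L : ℝ}
    (hdev_sq : ∀ i u w,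
      (m : ℝ)⁻¹ * ∑ j, ‖sampleGradDev (f i) (fI i) j u w‖ ^ 2 ≤ L ^ 2 * ‖u - w‖ ^ 2)
    (hs : 1 ≤ s) (ht : t < q) (k : Fin n × Fin B) :
    ∫ ω, ‖sampleDev f fI τ x s t k ω‖ ^ 2 ∂μ
      ≤ L ^ 2 * ∫ ω, ‖x (t + 1) s k.1 ω - x t s k.1 ω‖ ^ 2 ∂μ := by
  have hint : ∀ g : E → E → ℝ, Integrable (fun ω => g (x (t + 1) s k.1 ω) (x t s k.1 ω)) μ :=
    fun g => hτ.integrable fun ω ω' hω => by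
      obtain ⟨-, hxt, hx1, -⟩ := h.eq_of_sameSamplesUntil hs ht.le hω
      rw [hxt, hx1]
  calc ∫ ω, ‖sampleDev f fI τ x s t k ω‖ ^ 2 ∂μ
      = ∫ ω, (m : ℝ)⁻¹ * ∑ j, ‖sampleGradDev (f k.1) (fI k.1) j (x (t + 1) s k.1 ω)
          (x t s k.1 ω)‖ ^ 2 ∂μ :=
        h.integral_comp_sample_succ_eq_average hτ hs ht subset_rfl k.1 k.2
          (by simp [mem_samplesUntil])
          (u := fun _ => ()) (fun _ _ _ => rfl)
          fun _ a b j => ‖sampleGradDev (f k.1) (fI k.1) j a b‖ ^ 2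
    _ ≤ ∫ ω, L ^ 2 * ‖x (t + 1) s k.1 ω - x t s k.1 ω‖ ^ 2 ∂μ :=
        integral_mono
          (hint fun a b => (m : ℝ)⁻¹ * ∑ j, ‖sampleGradDev (f k.1) (fI k.1) j a b‖ ^ 2)
          (hint fun a b => L ^ 2 * ‖a - b‖ ^ 2)
          fun ω => hdev_sq k.1 _ _
    _ = L ^ 2 * ∫ ω, ‖x (t + 1) s k.1 ω - x t s k.1 ω‖ ^ 2 ∂μ := integral_const_mul _ _

theorem integral_inner_avgGradError_sampleDev_eq_zero (h : IsGTSarah q W α f fI τ x y v x0)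
    (hτ : IsIndepUniformSamples μ q τ) (hdev : ∀ i u w, ∑ j, sampleGradDev (f i) (fI i) j u w = 0)
    (hs : 1 ≤ s) (ht : t < q) (k : Fin n × Fin B) :
    ∫ ω, ⟪avgGradError fI x v s t ω, sampleDev f fI τ x s t k ω⟫ ∂μ = 0 := by
  have hu : (avgGradError fI x v s t).FactorsThrough
      fun ω (k : samplesUntil q s t) => sampleAt τ k.1 ω :=
    factorsThrough_of_sameSamplesUntil subset_rfl fun ω ω' hω => by
      obtain ⟨hvt, hxt, -, -⟩ := h.eq_of_sameSamplesUntil hs ht.le hω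
      simp only [avgGradError, hvt, hxt]
  calc _ = ∫ ω, (m : ℝ)⁻¹ * ∑ j, ⟪avgGradError fI x v s t ω,
        sampleGradDev (f k.1) (fI k.1) j (x (t + 1) s k.1 ω) (x t s k.1 ω)⟫ ∂μ :=
        h.integral_comp_sample_succ_eq_average hτ hs ht subset_rfl k.1 k.2
          (by simp [mem_samplesUntil]) hu
          fun a b c j => ⟪a, sampleGradDev (f k.1) (fI k.1) j b c⟫
    _ = 0 := by simp only [← inner_sum, hdev, inner_zero_right, mul_zero, integral_zero]

theorem integral_inner_sampleDev_eq_zero_of_ne (h : IsGTSarah q W α f fI τ x y v x0)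
    (hτ : IsIndepUniformSamples μ q τ) (hdev : ∀ i u w, ∑ j, sampleGradDev (f i) (fI i) j u w = 0)
    (hs : 1 ≤ s) (ht : t < q) {k k' : Fin n × Fin B} (hkk' : k ≠ k') :
    ∫ ω, ⟪sampleDev f fI τ x s t k ω, sampleDev f fI τ x s t k' ω⟫ ∂μ = 0 := by
  set k₀ : SampleIndex q (Fin n) (Fin B) := ⟨⟨(t + 1, s), Nat.le_add_left 1 t, ht, hs⟩, k.1, k.2⟩
  set S : Finset (SampleIndex q (Fin n) (Fin B)) := insert k₀ (samplesUntil q s t)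
  -- Conditioning on the samples before step `t + 1` and on the sample `k` leaves `k'` fresh.
  have hu : (sampleDev f fI τ x s t k).FactorsThrough fun ω (k : S) => sampleAt τ k.1 ω := by
    intro ω ω' hωω'
    obtain ⟨-, hxt, hx1, -⟩ :=
      h.eq_of_sameSamplesUntil hs ht.le (sameSamplesUntil_of_eq (subset_insert _ _) hωω')
    have hτk : τ (t + 1) s k.1 k.2 ω = τ (t + 1) s k.1 k.2 ω' :=
      congrFun hωω' ⟨k₀, mem_insert_self _ _⟩
    simp only [sampleDev, hτk, hxt, hx1]
  have hk' : (⟨⟨(t + 1, s), Nat.le_add_left 1 t, ht, hs⟩, k'.1, k'.2⟩ :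
      SampleIndex q (Fin n) (Fin B)) ∉ S := by
    simpa [S, k₀, mem_samplesUntil, Prod.ext_iff, eq_comm] using hkk'
  calc _ = ∫ ω, (m : ℝ)⁻¹ * ∑ j, ⟪sampleDev f fI τ x s t k ω,
        sampleGradDev (f k'.1) (fI k'.1) j (x (t + 1) s k'.1 ω) (x t s k'.1 ω)⟫ ∂μ :=
        h.integral_comp_sample_succ_eq_average hτ hs ht (subset_insert _ _) k'.1 k'.2 hk' hu
          fun a b c j => ⟪a, sampleGradDev (f k'.1) (fI k'.1) j b c⟫
    _ = 0 := by simp only [← inner_sum, hdev, inner_zero_right, mul_zero, integral_zero]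

theorem integral_norm_avgGradError_succ (h : IsGTSarah q W α f fI τ x y v x0)
    (hτ : IsIndepUniformSamples μ q τ) (hB : B ≠ 0)
    (hdev : ∀ i u w, ∑ j, sampleGradDev (f i) (fI i) j u w = 0) (hs : 1 ≤ s) (ht : t < q) :
    ∫ ω, ‖avgGradError fI x v s (t + 1) ω‖ ^ 2 ∂μ = ∫ ω, ‖avgGradError fI x v s t ω‖ ^ 2 ∂μ
      + ((n : ℝ)⁻¹ * (B : ℝ)⁻¹) ^ 2 * ∑ k, ∫ ω, ‖sampleDev f fI τ x s t k ω‖ ^ 2 ∂μ := by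
  have hdet : ∀ ω ω', SameSamplesUntil τ q s (t + 1) ω ω' →
      avgGradError fI x v s t ω = avgGradError fI x v s t ω' ∧
        ∀ k, sampleDev f fI τ x s t k ω = sampleDev f fI τ x s t k ω' := by
    intro ω ω' hω
    obtain ⟨hvt, hxt, hx1, -⟩ :=
      h.eq_of_sameSamplesUntil hs ht.le (hω.mono (.inr ⟨rfl, t.le_succ⟩))
    have hτ' := hω s (t + 1) hs (Nat.le_add_left 1 t) ht (.inr ⟨rfl, le_rfl⟩)
    exact ⟨by simp only [avgGradError, hvt, hxt], fun k => by simp only [sampleDev, hτ', hxt, hx1]⟩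
  simp only [h.avgGradError_succ hB hs ht]
  refine integral_norm_add_smul_sum_sq _ ?_ (fun k => ?_) (fun k k' => ?_)
    (h.integral_inner_avgGradError_sampleDev_eq_zero hτ hdev hs ht)
    (fun k k' => h.integral_inner_sampleDev_eq_zero_of_ne hτ hdev hs ht)
  all_goals refine hτ.integrable (s := s) (t := t + 1) fun ω ω' hω => ?_
  all_goals simp only [(hdet ω ω' hω).1, (hdet ω ω' hω).2]

theorem integral_norm_avgGradError_succ_le (h : IsGTSarah q W α f fI τ x y v x0)
    (hτ : IsIndepUniformSamples μ q τ) (hW : ∀ r, ∑ i, W i r = 1) (hB : B ≠ 0) {L : ℝ}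
    (hdev : ∀ i u w, ∑ j, sampleGradDev (f i) (fI i) j u w = 0)
    (hdev_sq : ∀ i u w,
      (m : ℝ)⁻¹ * ∑ j, ‖sampleGradDev (f i) (fI i) j u w‖ ^ 2 ≤ L ^ 2 * ‖u - w‖ ^ 2)
    (hs : 1 ≤ s) (ht : t < q) :
    ∫ ω, ‖avgGradError fI x v s (t + 1) ω‖ ^ 2 ∂μ ≤ ∫ ω, ‖avgGradError fI x v s t ω‖ ^ 2 ∂μ
      + L ^ 2 / (n ^ 2 * B) * (3 * ∫ ω, consensusError x s (t + 1) ω ∂μ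
        + 3 * ∫ ω, consensusError x s t ω ∂μ
        + 3 * n * α ^ 2 * ∫ ω, ‖(n : ℝ)⁻¹ • ∑ i, v t s i ω‖ ^ 2 ∂μ) := by
  have hint : ∀ g : Ω → ℝ, (∀ ω ω', (∀ i, v t s i ω = v t s i ω') →
      (∀ i, x t s i ω = x t s i ω') → (∀ i, x (t + 1) s i ω = x (t + 1) s i ω') → g ω = g ω') →
      Integrable g μ := fun g hg => hτ.integrable (s := s) (t := t) fun ω ω' hω =>
    let ⟨hvt, hxt, hx1, _⟩ := h.eq_of_sameSamplesUntil hs ht.le hω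
    hg ω ω' hvt hxt hx1
  have hinc : ∫ ω, ∑ i, ‖x (t + 1) s i ω - x t s i ω‖ ^ 2 ∂μ
      ≤ 3 * ∫ ω, consensusError x s (t + 1) ω ∂μ + 3 * ∫ ω, consensusError x s t ω ∂μ
        + 3 * n * α ^ 2 * ∫ ω, ‖(n : ℝ)⁻¹ • ∑ i, v t s i ω‖ ^ 2 ∂μ := by
    rw [← integral_const_mul, ← integral_const_mul, ← integral_const_mul, ← integral_add,
      ← integral_add]
    refine integral_mono ?_ ?_ fun ω => h.sum_norm_x_succ_sub_le hW hs ht.le ω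
    all_goals refine hint _ fun ω ω' hv hx hx' => ?_
    all_goals simp only [consensusError, hv, hx, hx']
  calc ∫ ω, ‖avgGradError fI x v s (t + 1) ω‖ ^ 2 ∂μ
      = ∫ ω, ‖avgGradError fI x v s t ω‖ ^ 2 ∂μ
        + ((n : ℝ)⁻¹ * (B : ℝ)⁻¹) ^ 2 * ∑ k, ∫ ω, ‖sampleDev f fI τ x s t k ω‖ ^ 2 ∂μ :=
      h.integral_norm_avgGradError_succ hτ hB hdev hs ht
    _ ≤ ∫ ω, ‖avgGradError fI x v s t ω‖ ^ 2 ∂μ + ((n : ℝ)⁻¹ * (B : ℝ)⁻¹) ^ 2 *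
        ∑ k : Fin n × Fin B, L ^ 2 * ∫ ω, ‖x (t + 1) s k.1 ω - x t s k.1 ω‖ ^ 2 ∂μ := by
      gcongr with k
      exact h.integral_norm_sampleDev_sq_le hτ hdev_sq hs ht k
    _ = ∫ ω, ‖avgGradError fI x v s t ω‖ ^ 2 ∂μ
        + L ^ 2 / (n ^ 2 * B) * ∫ ω, ∑ i, ‖x (t + 1) s i ω - x t s i ω‖ ^ 2 ∂μ := by
      rw [integral_finsetSum _ fun i _ => hint _ fun ω ω' _ hx hx' => by simp only [hx, hx'],
        Fintype.sum_prod_type]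
      simp only [sum_const, card_univ, Fintype.card_fin, nsmul_eq_mul, ← mul_sum]
      field_simp
    _ ≤ _ := by gcongr

theorem sum_integral_norm_avgGradError_le (h : IsGTSarah q W α f fI τ x y v x0)
    (hτ : IsIndepUniformSamples μ q τ) (hW : ∀ r, ∑ i, W i r = 1) (hn : n ≠ 0) (hB : B ≠ 0)
    {L : ℝ} (hdev : ∀ i u w, ∑ j, sampleGradDev (f i) (fI i) j u w = 0)
    (hdev_sq : ∀ i u w,
      (m : ℝ)⁻¹ * ∑ j, ‖sampleGradDev (f i) (fI i) j u w‖ ^ 2 ≤ L ^ 2 * ‖u - w‖ ^ 2)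
    (hs : 1 ≤ s) :
    ∑ t ∈ range (q + 1), ∫ ω, ‖avgGradError fI x v s t ω‖ ^ 2 ∂μ
      ≤ (3 * q * α ^ 2 * L ^ 2 / (n * B)) *
          ∑ t ∈ range q, ∫ ω, ‖(n : ℝ)⁻¹ • ∑ i, v t s i ω‖ ^ 2 ∂μ
        + (6 * q * L ^ 2 / (n * B)) *
          ∑ t ∈ range (q + 1), ∫ ω, consensusError x s t ω / n ∂μ := by
  set C : ℕ → ℝ := fun t => ∫ ω, consensusError x s t ω ∂μ
  set V : ℕ → ℝ := fun t => ∫ ω, ‖(n : ℝ)⁻¹ • ∑ i, v t s i ω‖ ^ 2 ∂μ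
  have hC : ∀ t, 0 ≤ C t := fun t => integral_nonneg fun ω => sum_nonneg fun i _ => sq_nonneg _
  have hV : ∀ t, 0 ≤ V t := fun t => integral_nonneg fun ω => sq_nonneg _
  have hsum := sum_range_succ_le_mul_sum_of_le_add
    (a := fun t => ∫ ω, ‖avgGradError fI x v s t ω‖ ^ 2 ∂μ)
    (κ := fun k => L ^ 2 / (n ^ 2 * B) * (3 * C (k + 1) + 3 * C k + 3 * n * α ^ 2 * V k))
    (by simp [h.avgGradError_zero hs])
    (fun k _ => mul_nonneg (by positivity) (by
      linarith [hC k, hC (k + 1), mul_nonneg (by positivity : (0 : ℝ) ≤ 3 * n * α ^ 2) (hV k)]))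
    (fun k hk => h.integral_norm_avgGradError_succ_le hτ hW hB hdev hdev_sq hs hk)
  have hC₁ : ∑ k ∈ range q, C (k + 1) ≤ ∑ t ∈ range (q + 1), C t := by
    rw [sum_range_succ']; linarith [hC 0]
  have hC₀ : ∑ k ∈ range q, C k ≤ ∑ t ∈ range (q + 1), C t := by
    rw [sum_range_succ]; linarith [hC q]
  calc _ ≤ q * (L ^ 2 / (n ^ 2 * B)) * (3 * ∑ k ∈ range q, C (k + 1) + 3 * ∑ k ∈ range q, C k
        + 3 * n * α ^ 2 * ∑ k ∈ range q, V k) := by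
        simpa only [← mul_sum, sum_add_distrib, mul_assoc] using hsum
    _ ≤ q * (L ^ 2 / (n ^ 2 * B)) * (6 * ∑ t ∈ range (q + 1), C t
        + 3 * n * α ^ 2 * ∑ k ∈ range q, V k) := by gcongr; linarith
    _ = _ := by
        simp only [integral_div, ← sum_div, C, V]
        field_simp
        ring

end Expectation

end IsGTSarah

end GTSarah

theorem gt_sarah_vr_sum_general
    {Ω : Type*} [MeasurableSpace Ω] (μ : Measure Ω) [IsProbabilityMeasure μ]
    (n m p q B : ℕ) (hn : 1 ≤ n)
    (hB1 : 1 ≤ B)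
    (α L : ℝ)
    (f : Fin n → Fin m → EuclideanSpace ℝ (Fin p) → ℝ)
    (hdiff : ∀ i j, Differentiable ℝ (f i j))
    (hsmooth : ∀ i (u w : EuclideanSpace ℝ (Fin p)),
      (m : ℝ)⁻¹ * ∑ j, ‖gradient (f i j) u - gradient (f i j) w‖ ^ 2 ≤ L ^ 2 * ‖u - w‖ ^ 2)
    (fI : Fin n → EuclideanSpace ℝ (Fin p) → ℝ)
    (hfI : ∀ i, fI i = fun z => (m : ℝ)⁻¹ * ∑ j, f i j z)
    (W : Matrix (Fin n) (Fin n) ℝ)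
    (hWcol : ∀ r, ∑ i, W i r = 1)
    (τ : ℕ → ℕ → Fin n → Fin B → Ω → Fin m)
    (hτmeas : ∀ t s i l, Measurable (τ t s i l))
    (hτindep : ProbabilityTheory.iIndepFun
      (fun idx : {u : ℕ × ℕ // 1 ≤ u.1 ∧ u.1 ≤ q ∧ 1 ≤ u.2} × Fin n × Fin B =>
        τ idx.1.1.1 idx.1.1.2 idx.2.1 idx.2.2) μ)
    (hτunif : ∀ t s (i : Fin n) (l : Fin B), 1 ≤ t → t ≤ q → 1 ≤ s → ∀ j : Fin m,
      μ (τ t s i l ⁻¹' {j}) = 1 / (m : ENNReal))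
    (x y : ℕ → ℕ → Fin n → Ω → EuclideanSpace ℝ (Fin p))
    (v : ℤ → ℕ → Fin n → Ω → EuclideanSpace ℝ (Fin p))
    (x0 : EuclideanSpace ℝ (Fin p))
    (hx0 : ∀ i ω, x 0 1 i ω = x0)
    (hy0 : ∀ i ω, y 0 1 i ω = 0)
    (hvm1 : ∀ i ω, v (-1) 1 i ω = 0)
    (hv0 : ∀ s, 1 ≤ s → ∀ i ω, v 0 s i ω = gradient (fI i) (x 0 s i ω))
    (hvrec : ∀ s, 1 ≤ s → ∀ t : ℕ, 1 ≤ t → t ≤ q → ∀ i ω,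
      v (t : ℤ) s i ω = (B : ℝ)⁻¹ • (∑ l, (gradient (f i (τ t s i l ω)) (x t s i ω)
        - gradient (f i (τ t s i l ω)) (x (t - 1) s i ω))) + v ((t : ℤ) - 1) s i ω)
    (hyrec : ∀ s, 1 ≤ s → ∀ t : ℕ, t ≤ q → ∀ i ω,
      y (t + 1) s i ω = (∑ r, W i r • y t s r ω) + v (t : ℤ) s i ω - v ((t : ℤ) - 1) s i ω)
    (hxrec : ∀ s, 1 ≤ s → ∀ t : ℕ, t ≤ q → ∀ i ω,
      x (t + 1) s i ω = (∑ r, W i r • x t s r ω) - α • y (t + 1) s i ω)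
    (hxcarry : ∀ s, 1 ≤ s → ∀ i ω, x 0 (s + 1) i ω = x (q + 1) s i ω)
    (hycarry : ∀ s, 1 ≤ s → ∀ i ω, y 0 (s + 1) i ω = y (q + 1) s i ω)
    (hvcarry : ∀ s, 1 ≤ s → ∀ i ω, v (-1) (s + 1) i ω = v (q : ℤ) s i ω)
    :
    ∀ s : ℕ, 1 ≤ s →
      ∑ t ∈ range (q + 1), ∫ ω, ‖(n : ℝ)⁻¹ • ∑ i, v (t : ℤ) s i ω
          - (n : ℝ)⁻¹ • ∑ i, gradient (fI i) (x t s i ω)‖ ^ 2 ∂μ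
        ≤ (3 * q * α ^ 2 * L ^ 2 / (n * B)) *
            ∑ t ∈ range q, ∫ ω, ‖(n : ℝ)⁻¹ • ∑ i, v (t : ℤ) s i ω‖ ^ 2 ∂μ
          + (6 * q * L ^ 2 / (n * B)) * ∑ t ∈ range (q + 1),
              ∫ ω, (∑ i, ‖x t s i ω - (n : ℝ)⁻¹ • ∑ i', x t s i' ω‖ ^ 2) / (n : ℝ) ∂μ := by
  intro s hs
  have hfI' : ∀ i, fI i = fun z => (Fintype.card (Fin m) : ℝ)⁻¹ * ∑ j, f i j z := by
    simpa using hfI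
  have hdev_sq : ∀ i u w,
      (m : ℝ)⁻¹ * ∑ j, ‖sampleGradDev (f i) (fI i) j u w‖ ^ 2 ≤ L ^ 2 * ‖u - w‖ ^ 2 :=
    fun i u w => (mul_le_mul_of_nonneg_left (sum_norm_sampleGradDev_sq_le (hfI' i) (hdiff i) u w)
      (by positivity)).trans (hsmooth i u w)
  exact IsGTSarah.sum_integral_norm_avgGradError_le
    ⟨hx0, hy0, hvm1, hv0, hvrec, hyrec, hxrec, hxcarry, hycarry, hvcarry⟩
    ⟨hτmeas, hτindep, hτunif⟩ hWcol (by omega) (by omega)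
    (fun i => sum_sampleGradDev (hfI' i) (hdiff i)) hdev_sq hs

/-- GT-SARAH setup. -/
theorem gt_sarah_vr_sum
    {Ω : Type*} [MeasurableSpace Ω] (μ : Measure Ω) [IsProbabilityMeasure μ]
    (n m p q B : ℕ) (hn : 1 ≤ n) (hm : 1 ≤ m) (hp : 1 ≤ p) (hq : 1 ≤ q)
    (hB1 : 1 ≤ B) (hBm : B ≤ m)
    (α L : ℝ) (hα0 : 0 < α) (hL : 0 < L)
    (f : Fin n → Fin m → EuclideanSpace ℝ (Fin p) → ℝ)
    (hdiff : ∀ i j, Differentiable ℝ (f i j))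
    (hsmooth : ∀ i (u w : EuclideanSpace ℝ (Fin p)),
      (m : ℝ)⁻¹ * ∑ j, ‖gradient (f i j) u - gradient (f i j) w‖ ^ 2 ≤ L ^ 2 * ‖u - w‖ ^ 2)
    (fI : Fin n → EuclideanSpace ℝ (Fin p) → ℝ)
    (hfI : ∀ i, fI i = fun z => (m : ℝ)⁻¹ * ∑ j, f i j z)
    (F : EuclideanSpace ℝ (Fin p) → ℝ)
    (hF : F = fun z => (n : ℝ)⁻¹ * ∑ i, fI i z)
    (Fstar : ℝ) (hFbdd : BddBelow (Set.range F)) (hFstar : Fstar = sInf (Set.range F))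
    (W : Matrix (Fin n) (Fin n) ℝ)
    (hWnonneg : ∀ i r, 0 ≤ W i r) (hWdiag : ∀ i, 0 < W i i)
    (hWprim : ∃ k : ℕ, 0 < k ∧ ∀ i r, 0 < (W ^ k) i r)
    (hWrow : ∀ i, ∑ r, W i r = 1) (hWcol : ∀ r, ∑ i, W i r = 1)
    (lam : ℝ)
    (hlam : lam = ‖(Matrix.toEuclideanCLM (𝕜 := ℝ) (W - Matrix.of fun _ _ => (n : ℝ)⁻¹) :
      EuclideanSpace ℝ (Fin n) →L[ℝ] EuclideanSpace ℝ (Fin n))‖)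
    (hlam0 : 0 ≤ lam) (hlam1 : lam < 1)
    (τ : ℕ → ℕ → Fin n → Fin B → Ω → Fin m)
    (hτmeas : ∀ t s i l, Measurable (τ t s i l))
    (hτindep : ProbabilityTheory.iIndepFun
      (fun idx : {u : ℕ × ℕ // 1 ≤ u.1 ∧ u.1 ≤ q ∧ 1 ≤ u.2} × Fin n × Fin B =>
        τ idx.1.1.1 idx.1.1.2 idx.2.1 idx.2.2) μ)
    (hτunif : ∀ t s (i : Fin n) (l : Fin B), 1 ≤ t → t ≤ q → 1 ≤ s → ∀ j : Fin m,
      μ (τ t s i l ⁻¹' {j}) = 1 / (m : ENNReal))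
    (x y : ℕ → ℕ → Fin n → Ω → EuclideanSpace ℝ (Fin p))
    (v : ℤ → ℕ → Fin n → Ω → EuclideanSpace ℝ (Fin p))
    (x0 : EuclideanSpace ℝ (Fin p))
    (hx0 : ∀ i ω, x 0 1 i ω = x0)
    (hy0 : ∀ i ω, y 0 1 i ω = 0)
    (hvm1 : ∀ i ω, v (-1) 1 i ω = 0)
    (hv0 : ∀ s, 1 ≤ s → ∀ i ω, v 0 s i ω = gradient (fI i) (x 0 s i ω))
    (hvrec : ∀ s, 1 ≤ s → ∀ t : ℕ, 1 ≤ t → t ≤ q → ∀ i ω,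
      v (t : ℤ) s i ω = (B : ℝ)⁻¹ • (∑ l, (gradient (f i (τ t s i l ω)) (x t s i ω)
        - gradient (f i (τ t s i l ω)) (x (t - 1) s i ω))) + v ((t : ℤ) - 1) s i ω)
    (hyrec : ∀ s, 1 ≤ s → ∀ t : ℕ, t ≤ q → ∀ i ω,
      y (t + 1) s i ω = (∑ r, W i r • y t s r ω) + v (t : ℤ) s i ω - v ((t : ℤ) - 1) s i ω)
    (hxrec : ∀ s, 1 ≤ s → ∀ t : ℕ, t ≤ q → ∀ i ω,
      x (t + 1) s i ω = (∑ r, W i r • x t s r ω) - α • y (t + 1) s i ω)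
    (hxcarry : ∀ s, 1 ≤ s → ∀ i ω, x 0 (s + 1) i ω = x (q + 1) s i ω)
    (hycarry : ∀ s, 1 ≤ s → ∀ i ω, y 0 (s + 1) i ω = y (q + 1) s i ω)
    (hvcarry : ∀ s, 1 ≤ s → ∀ i ω, v (-1) (s + 1) i ω = v (q : ℤ) s i ω)
    :
    ∀ s : ℕ, 1 ≤ s →
      ∑ t ∈ range (q + 1), ∫ ω, ‖(n : ℝ)⁻¹ • ∑ i, v (t : ℤ) s i ω
          - (n : ℝ)⁻¹ • ∑ i, gradient (fI i) (x t s i ω)‖ ^ 2 ∂μ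
        ≤ (3 * q * α ^ 2 * L ^ 2 / (n * B)) *
            ∑ t ∈ range q, ∫ ω, ‖(n : ℝ)⁻¹ • ∑ i, v (t : ℤ) s i ω‖ ^ 2 ∂μ
          + (6 * q * L ^ 2 / (n * B)) * ∑ t ∈ range (q + 1),
              ∫ ω, (∑ i, ‖x t s i ω - (n : ℝ)⁻¹ • ∑ i', x t s i' ω‖ ^ 2) / (n : ℝ) ∂μ :=
  gt_sarah_vr_sum_general μ n m p q B hn hB1 α L f hdiff hsmooth fI hfI W hWcol τ hτmeas hτindep
    hτunif x y v x0 hx0 hy0 hvm1 hv0 hvrec hyrec hxrec hxcarry hycarry hvcarry
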